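/- Sufficiency of full product-structured sets for multicausal polarity: Suppose for every i ∈ {1,...,N} there are P^i-full Borel sets A^{i,1} ⊆ Ω^i_1 and, for every t ∈ {2,...,T} and history ω^{1:N}_{1:t−1}, K^i_t(ω^i_{1:t−1};·)-full sets A^{t,i}_{ω^{1:N}_{1:t−1}} ⊆ Ω^i_t, such that the glued set E' := [⊠_{t=1}^T (A^{t,1}_• × ... × A^{t,N}_•)]^C is Borel. Then π(E') = 0 for every multicausal coupling π of P^1,...,P^N; hence any Borel set E ⊆ E' is polar for the multicausal transport problem. -/

import Mathlib

open MeasureTheory ProbabilityTheory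

noncomputable section

abbrev OTPath (T : ℕ) := Fin T → ℝ

def ev {T : ℕ} (x : OTPath T) (n : ℕ) : ℝ := if h : n < T then x ⟨n, h⟩ else 0

def trunc {T : ℕ} (x : OTPath T) (t : ℕ) : OTPath T :=
  fun s => if (s : ℕ) < t then x s else 0

def set1 {T : ℕ} (x : OTPath T) (t : ℕ) (v : ℝ) : OTPath T :=
  fun s => if (s : ℕ) = t then v else x s

def filt (T t : ℕ) : MeasurableSpace (OTPath T) :=
  ⨆ s : {s : Fin T // (s : ℕ) < t},
    MeasurableSpace.comap (fun x : OTPath T => x s.1) inferInstance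

def filtI (N T : ℕ) (i : Fin N) (t : ℕ) : MeasurableSpace (Fin N → OTPath T) :=
  ⨆ s : {s : Fin T // (s : ℕ) < t},
    MeasurableSpace.comap (fun ω : Fin N → OTPath T => ω i s.1) inferInstance

lemma filtI_le (N T : ℕ) (i : Fin N) (t : ℕ) :
    filtI N T i t ≤ (inferInstance : MeasurableSpace (Fin N → OTPath T)) :=
  iSup_le fun s => Measurable.comap_le
    ((measurable_pi_apply s.1).comp (measurable_pi_apply i) :
      Measurable fun ω : Fin N → OTPath T => ω i s.1)

def filtOthers (N T : ℕ) (i : Fin N) (t : ℕ) : MeasurableSpace (Fin N → OTPath T) :=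
  ⨆ j : {j : Fin N // j ≠ i}, filtI N T j.1 t

/-- Multicausality of a probability measure on the product of the `N` path spaces. -/
def Multicausal (N T : ℕ) (π : Measure (Fin N → OTPath T)) [IsFiniteMeasure π] : Prop :=
  ∀ i : Fin N, ∀ t : ℕ, 1 ≤ t → t ≤ T →
    CondIndep (filtI N T i t) (filtI N T i T) (filtOthers N T i t) (filtI_le N T i t) π

/-!
On the σ-algebra generated by the first `t + 1` values of the `j`-th path and the first `t`
values of the others, a multicausal coupling `π` agrees with the measure that redraws the
time-`t` value of the `j`-th path from `K j t`: on rectangles this is conditional independence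
combined with the marginal `P j`, and rectangles form a π-system. Because the slice `A t j ω`
is `K j t`-full and depends only on the past, this pushes "`π`-a.e. path lies in the first `t`
layers of the glued set" from `t` to `t + 1`; the base case is the `P i`-fullness of the first
slices. The layers are not assumed measurable: they become so by backward induction from the
Borel glued set, each being the set where the kernel mass of the next fibre equals one.
-/

section General

variable {Ω : Type*}

lemma MeasurableSpace.isPiSystem_image2_inter (m₁ m₂ : MeasurableSpace Ω) :
    IsPiSystem (Set.image2 (· ∩ ·) {s | MeasurableSet[m₁] s} {s | MeasurableSet[m₂] s}) := by
  rintro _ ⟨a₁, ha₁, a₂, ha₂, rfl⟩ _ ⟨b₁, hb₁, b₂, hb₂, rfl⟩ -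
  refine ⟨a₁ ∩ b₁, ha₁.inter hb₁, a₂ ∩ b₂, ha₂.inter hb₂, ?_⟩
  exact Set.inter_inter_inter_comm a₁ b₁ a₂ b₂

lemma MeasurableSpace.sup_eq_generateFrom_image2_inter (m₁ m₂ : MeasurableSpace Ω) :
    m₁ ⊔ m₂ = generateFrom (Set.image2 (· ∩ ·) {s | MeasurableSet[m₁] s}
      {s | MeasurableSet[m₂] s}) := by
  apply le_antisymm
  · refine sup_le (fun s hs => measurableSet_generateFrom ?_)
      (fun s hs => measurableSet_generateFrom ?_)
    · exact ⟨s, hs, Set.univ, MeasurableSet.univ, Set.inter_univ s⟩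
    · exact ⟨Set.univ, MeasurableSet.univ, s, hs, Set.univ_inter s⟩
  · refine generateFrom_le ?_
    rintro _ ⟨s₁, hs₁, s₂, hs₂, rfl⟩
    exact (le_sup_left (b := m₂) _ hs₁).inter (le_sup_right (a := m₁) _ hs₂)

lemma MeasureTheory.condExp_comp_ae_eq {β : Type*} {mΩ : MeasurableSpace Ω}
    {m mβ : MeasurableSpace β} (hm : m ≤ mβ) {μ : Measure Ω} [IsFiniteMeasure μ] {f : Ω → β}
    (hf : Measurable f) {g : β → ℝ} (hg : Integrable g (μ.map f)) :
    μ[g ∘ f | m.comap f] =ᵐ[μ] (μ.map f)[g | m] ∘ f := by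
  have hmf : m.comap f ≤ mΩ := (MeasurableSpace.comap_mono hm).trans hf.comap_le
  have hcond : AEStronglyMeasurable ((μ.map f)[g | m]) (μ.map f) :=
    (stronglyMeasurable_condExp.mono hm).aestronglyMeasurable
  have hcond_int : Integrable ((μ.map f)[g | m] ∘ f) μ :=
    (integrable_map_measure hcond hf.aemeasurable).mp integrable_condExp
  refine (ae_eq_condExp_of_forall_setIntegral_eq hmf
    ((integrable_map_measure hg.1 hf.aemeasurable).mp hg)
    (fun _ _ _ => hcond_int.integrableOn) ?_
    (stronglyMeasurable_condExp.comp_measurable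
      (Measurable.of_comap_le le_rfl)).aestronglyMeasurable).symm
  rintro _ ⟨s, hs, rfl⟩ -
  change ∫ x in f ⁻¹' s, (μ.map f)[g | m] (f x) ∂μ = ∫ x in f ⁻¹' s, g (f x) ∂μ
  rw [← setIntegral_map (hm s hs) hcond hf.aemeasurable,
    ← setIntegral_map (hm s hs) hg.1 hf.aemeasurable, setIntegral_condExp hm hg hs]

lemma ProbabilityTheory.CondIndep.measureReal_inter
    {m' m₁ m₂ mΩ : MeasurableSpace Ω} [StandardBorelSpace Ω] {hm' : m' ≤ mΩ} {μ : Measure Ω}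
    [IsFiniteMeasure μ]
    (h : CondIndep m' m₁ m₂ hm' μ) (hm₁ : m₁ ≤ mΩ) (hm₂ : m₂ ≤ mΩ) {s₁ s₂ : Set Ω}
    (hs₁ : MeasurableSet[m₁] s₁) (hs₂ : MeasurableSet[m₂] s₂) :
    μ.real (s₁ ∩ s₂) = ∫ ω in s₂, (μ⟦s₁ | m'⟧) ω ∂μ := by
  have hprod := (condIndep_iff m' m₁ m₂ hm' hm₁ hm₂ μ).mp h s₁ s₂ hs₁ hs₂
  have hs₂' : MeasurableSet s₂ := hm₂ _ hs₂
  have hbdd : ∀ᵐ ω ∂μ, ‖(μ⟦s₁ | m'⟧) ω‖ ≤ 1 := by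
    refine ae_bdd_abs_condExp_of_ae_bdd_abs (Filter.Eventually.of_forall fun ω => ?_)
    by_cases hω : ω ∈ s₁ <;> simp [hω]
  have hind : Integrable (s₂.indicator fun _ => (1 : ℝ)) μ :=
    (integrable_const 1).indicator hs₂'
  have hmul : Integrable (μ⟦s₁ | m'⟧ * s₂.indicator fun _ => (1 : ℝ)) μ :=
    hind.bdd_mul ((stronglyMeasurable_condExp.mono hm').aestronglyMeasurable) hbdd
  calc μ.real (s₁ ∩ s₂) = ∫ ω, (μ⟦s₁ ∩ s₂ | m'⟧) ω ∂μ := by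
        rw [integral_condExp hm']
        exact (integral_indicator_one ((hm₁ _ hs₁).inter hs₂')).symm
    _ = ∫ ω, (μ⟦s₁ | m'⟧ * μ⟦s₂ | m'⟧) ω ∂μ := integral_congr_ae hprod
    _ = ∫ ω, (μ[μ⟦s₁ | m'⟧ * s₂.indicator fun _ => (1 : ℝ) | m']) ω ∂μ :=
        integral_congr_ae
          (condExp_mul_of_stronglyMeasurable_left stronglyMeasurable_condExp hmul hind).symm
    _ = ∫ ω in s₂, (μ⟦s₁ | m'⟧) ω ∂μ := by
        rw [integral_condExp hm', ← integral_indicator hs₂']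
        congr 1 with ω
        by_cases hω : ω ∈ s₂ <;> simp [hω]

end General

section Paths

variable {N T : ℕ}

lemma trunc_zero_right (x : OTPath T) : trunc x 0 = 0 := by
  funext s
  simp [trunc]

lemma trunc_trunc_of_le (x : OTPath T) {s t : ℕ} (h : s ≤ t) :
    trunc (trunc x t) s = trunc x s := by
  funext u
  simp only [trunc]
  split_ifs <;> first | rfl | omega

lemma trunc_set1_of_le (x : OTPath T) {s t : ℕ} (h : s ≤ t) (v : ℝ) :
    trunc (set1 x t v) s = trunc x s := by
  funext u
  simp only [trunc, set1]
  split_ifs <;> first | rfl | omega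

lemma ev_trunc_of_lt (x : OTPath T) {s t : ℕ} (h : s < t) : ev (trunc x t) s = ev x s := by
  simp only [ev, trunc]
  split_ifs <;> simp_all

lemma ev_set1_self (x : OTPath T) {t : ℕ} (ht : t < T) (v : ℝ) : ev (set1 x t v) t = v := by
  simp [ev, set1, ht]

lemma measurable_set1 (t : ℕ) : Measurable fun p : OTPath T × ℝ => set1 p.1 t p.2 := by
  refine measurable_pi_lambda _ fun s => ?_
  by_cases hs : (s : ℕ) = t
  · simpa [set1, hs] using measurable_snd
  · simp only [set1, hs, if_false]
    exact (measurable_pi_apply s).comp measurable_fst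

def updateValue (ω : Fin N → OTPath T) (j : Fin N) (t : ℕ) (v : ℝ) : Fin N → OTPath T :=
  Function.update ω j (set1 (ω j) t v)

@[simp]
lemma updateValue_apply_self (ω : Fin N → OTPath T) (j : Fin N) (t : ℕ) (v : ℝ) :
    updateValue ω j t v j = set1 (ω j) t v :=
  Function.update_self _ _ _

lemma updateValue_apply_of_ne (ω : Fin N → OTPath T) {j k : Fin N} (h : k ≠ j) (t : ℕ)
    (v : ℝ) : updateValue ω j t v k = ω k :=
  Function.update_of_ne h _ _

lemma trunc_updateValue_of_le (ω : Fin N → OTPath T) (j k : Fin N) {s t : ℕ} (h : s ≤ t)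
    (v : ℝ) : trunc (updateValue ω j t v k) s = trunc (ω k) s := by
  by_cases hk : k = j
  · subst hk
    rw [updateValue_apply_self, trunc_set1_of_le _ h]
  · rw [updateValue_apply_of_ne _ hk]

lemma measurable_updateValue (j : Fin N) (t : ℕ) :
    Measurable fun p : (Fin N → OTPath T) × ℝ => updateValue p.1 j t p.2 :=
  have hset1 : Measurable fun p : (Fin N → OTPath T) × ℝ => set1 (p.1 j) t p.2 :=
    (measurable_set1 t).comp (f := fun p : (Fin N → OTPath T) × ℝ => (p.1 j, p.2)) (by fun_prop)
  measurable_update'.comp (measurable_fst.prodMk hset1)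

end Paths

section Filtrations

variable {N T : ℕ}

lemma filt_le (T t : ℕ) : filt T t ≤ (inferInstance : MeasurableSpace (OTPath T)) :=
  iSup_le fun s => (measurable_pi_apply s.1).comap_le

lemma filtI_mono (i : Fin N) {t₁ t₂ : ℕ} (h : t₁ ≤ t₂) : filtI N T i t₁ ≤ filtI N T i t₂ :=
  iSup_le fun s => le_iSup_of_le ⟨s.1, s.2.trans_le h⟩ le_rfl

lemma filtI_eq_comap (i : Fin N) (t : ℕ) :
    filtI N T i t = (filt T t).comap fun ω : Fin N → OTPath T => ω i := by
  simp only [filtI, filt, MeasurableSpace.comap_iSup, MeasurableSpace.comap_comp]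
  rfl

lemma filtI_le_filtOthers {i j : Fin N} (h : i ≠ j) (t : ℕ) :
    filtI N T i t ≤ filtOthers N T j t :=
  le_iSup (fun k : {k : Fin N // k ≠ j} => filtI N T k.1 t) ⟨i, h⟩

lemma filtOthers_le (j : Fin N) (t : ℕ) :
    filtOthers N T j t ≤ (inferInstance : MeasurableSpace (Fin N → OTPath T)) :=
  iSup_le fun k => filtI_le N T k.1 t

lemma update_mem_iff_of_measurableSet_filtOthers {j : Fin N} {t : ℕ}
    {s : Set (Fin N → OTPath T)} (hs : MeasurableSet[filtOthers N T j t] s)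
    (ω : Fin N → OTPath T) (x : OTPath T) : Function.update ω j x ∈ s ↔ ω ∈ s := by
  let others : (Fin N → OTPath T) → {k : Fin N // k ≠ j} → OTPath T := fun ω k => ω k
  have hle : filtOthers N T j t ≤ MeasurableSpace.comap others inferInstance := by
    refine iSup_le fun k => iSup_le fun u => ?_
    rw [show (fun ω : Fin N → OTPath T => ω k.1 u.1)
        = (fun q : {k : Fin N // k ≠ j} → OTPath T => q k u.1) ∘ others from rfl,
      ← MeasurableSpace.comap_comp]
    exact MeasurableSpace.comap_mono (Measurable.comap_le (by fun_prop))
  obtain ⟨s', -, rfl⟩ := hle s hs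
  have hothers : others (Function.update ω j x) = others ω :=
    funext fun k => Function.update_of_ne k.2 _ _
  simp only [Set.mem_preimage, hothers]

lemma measurable_trunc_eval (i : Fin N) (t : ℕ) :
    Measurable[filtI N T i t] fun ω : Fin N → OTPath T => trunc (ω i) t := by
  refine @measurable_pi_lambda _ _ _ (filtI N T i t) _ _ fun s => ?_
  by_cases hs : (s : ℕ) < t
  · simp only [trunc, hs, if_true]
    exact Measurable.of_comap_le (le_iSup_of_le ⟨s, hs⟩ le_rfl)
  · simp only [trunc, hs, if_false]
    exact measurable_const

/-- The information available once the `j`-th path has revealed its time-`t` value while the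
other paths are still at time `t - 1`. -/
def filtNext (N T : ℕ) (j : Fin N) (t : ℕ) : MeasurableSpace (Fin N → OTPath T) :=
  filtI N T j (t + 1) ⊔ filtOthers N T j t

lemma filtNext_le (j : Fin N) (t : ℕ) :
    filtNext N T j t ≤ (inferInstance : MeasurableSpace (Fin N → OTPath T)) :=
  sup_le (filtI_le N T j (t + 1)) (filtOthers_le j t)

def truncNext (j : Fin N) (t : ℕ) (ω : Fin N → OTPath T) : Fin N → OTPath T :=
  fun k => if k = j then trunc (ω j) (t + 1) else trunc (ω k) t

lemma measurable_truncNext (j : Fin N) (t : ℕ) :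
    Measurable[filtNext N T j t] (truncNext j t) := by
  refine @measurable_pi_lambda _ _ _ (filtNext N T j t) _ _ fun k => ?_
  by_cases hk : k = j
  · subst hk
    simp only [truncNext, if_true]
    exact (measurable_trunc_eval k (t + 1)).mono le_sup_left le_rfl
  · simp only [truncNext, hk, if_false]
    exact (measurable_trunc_eval k t).mono ((filtI_le_filtOthers hk t).trans le_sup_right) le_rfl

lemma measurableSet_filtNext_of_preimage_truncNext {j : Fin N} {t : ℕ}
    {s : Set (Fin N → OTPath T)} (hs : MeasurableSet s) (hinv : truncNext j t ⁻¹' s = s) :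
    MeasurableSet[filtNext N T j t] s :=
  hinv ▸ measurable_truncNext j t hs

end Filtrations

section StepMeasure

variable {N T : ℕ}

def IsStepKernel (μ : Measure (OTPath T)) (t : ℕ) (κ : Kernel (OTPath T) ℝ) : Prop :=
  ∀ h : OTPath T → ℝ, Measurable[filt T (t + 1)] h → Integrable h μ →
    μ[h | filt T t] =ᵐ[μ] fun x => ∫ v, h (set1 x t v) ∂(κ x)

def stepMeasure (π : Measure (Fin N → OTPath T)) (j : Fin N) (t : ℕ)
    (κ : Kernel (OTPath T) ℝ) : Measure (Fin N → OTPath T) :=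
  (π ⊗ₘ κ.comap (fun ω => ω j) (measurable_pi_apply j)).map
    fun p => updateValue p.1 j t p.2

variable {π : Measure (Fin N → OTPath T)} {j : Fin N} {t : ℕ} {κ : Kernel (OTPath T) ℝ}

lemma stepMeasure_apply [SFinite π] [IsSFiniteKernel κ] {s : Set (Fin N → OTPath T)}
    (hs : MeasurableSet s) :
    stepMeasure π j t κ s = ∫⁻ ω, κ (ω j) {v | updateValue ω j t v ∈ s} ∂π := by
  rw [stepMeasure, Measure.map_apply (measurable_updateValue j t) hs,
    Measure.compProd_apply (measurable_updateValue j t hs)]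
  rfl

instance [IsProbabilityMeasure π] [IsMarkovKernel κ] :
    IsProbabilityMeasure (stepMeasure π j t κ) :=
  Measure.isProbabilityMeasure_map (measurable_updateValue j t).aemeasurable

lemma measurable_kernel_updateValue_mem [IsSFiniteKernel κ] {s : Set (Fin N → OTPath T)}
    (hs : MeasurableSet s) : Measurable fun ω => κ (ω j) {v | updateValue ω j t v ∈ s} :=
  Kernel.measurable_kernel_prodMk_left
    (κ := κ.comap (fun ω : Fin N → OTPath T => ω j) (measurable_pi_apply j))
    (measurable_updateValue j t hs)

lemma condExp_indicator_eval_ae_eq [IsFiniteMeasure π]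
    (hκ : IsStepKernel (π.map fun ω => ω j) t κ) {S : Set (OTPath T)}
    (hS : MeasurableSet[filt T (t + 1)] S) :
    π⟦(fun ω => ω j) ⁻¹' S | filtI N T j t⟧
      =ᵐ[π] fun ω => (κ (ω j)).real {v | set1 (ω j) t v ∈ S} := by
  let h : OTPath T → ℝ := S.indicator fun _ => 1
  have hh : Measurable[filt T (t + 1)] h :=
    (@measurable_const _ _ _ (filt T (t + 1)) _).indicator hS
  have hh_int : Integrable h (π.map fun ω => ω j) :=
    (integrable_const 1).indicator (filt_le T (t + 1) S hS)
  rw [filtI_eq_comap]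
  refine (condExp_comp_ae_eq (filt_le T t) (measurable_pi_apply j) hh_int).trans
    ((ae_eq_comp (measurable_pi_apply j).aemeasurable (hκ h hh hh_int)).trans
      (Filter.Eventually.of_forall fun ω => ?_))
  have hset1 : Measurable fun v => set1 (ω j) t v :=
    (measurable_set1 t).comp (measurable_const.prodMk measurable_id)
  exact integral_indicator_one (hset1 (filt_le T (t + 1) S hS))

lemma stepMeasure_inter_of_measurableSet_filtOthers [SFinite π] [IsSFiniteKernel κ]
    {s₁ s₂ : Set (Fin N → OTPath T)} (hs₁ : MeasurableSet s₁)
    (hs₂ : MeasurableSet[filtOthers N T j t] s₂) :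
    stepMeasure π j t κ (s₁ ∩ s₂) = ∫⁻ ω in s₂, κ (ω j) {v | updateValue ω j t v ∈ s₁} ∂π := by
  have hs₂' : MeasurableSet s₂ := filtOthers_le j t _ hs₂
  rw [stepMeasure_apply (hs₁.inter hs₂'), ← lintegral_indicator hs₂']
  refine lintegral_congr fun ω => ?_
  have hupd : ∀ v, updateValue ω j t v ∈ s₂ ↔ ω ∈ s₂ := fun v =>
    update_mem_iff_of_measurableSet_filtOthers hs₂ ω _
  by_cases hω : ω ∈ s₂ <;> simp [hω, hupd]

lemma measure_inter_eq_stepMeasure [IsProbabilityMeasure π] [IsMarkovKernel κ]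
    (hκ : IsStepKernel (π.map fun ω => ω j) t κ)
    (hci : CondIndep (filtI N T j t) (filtI N T j T) (filtOthers N T j t) (filtI_le N T j t) π)
    (ht : t < T) {s₁ s₂ : Set (Fin N → OTPath T)}
    (hs₁ : MeasurableSet[filtI N T j (t + 1)] s₁) (hs₂ : MeasurableSet[filtOthers N T j t] s₂) :
    π (s₁ ∩ s₂) = stepMeasure π j t κ (s₁ ∩ s₂) := by
  have hs₁' : MeasurableSet s₁ := filtI_le N T j (t + 1) _ hs₁
  have hstep := stepMeasure_inter_of_measurableSet_filtOthers (π := π) (κ := κ) hs₁' hs₂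
  obtain ⟨S, hS, rfl⟩ := (filtI_eq_comap j (t + 1) ▸ hs₁ :
    MeasurableSet[(filt T (t + 1)).comap fun ω : Fin N → OTPath T => ω j] s₁)
  have hreal : π.real ((fun ω => ω j) ⁻¹' S ∩ s₂)
      = (∫⁻ ω in s₂, κ (ω j) {v | updateValue ω j t v ∈ (fun ω => ω j) ⁻¹' S} ∂π).toReal := by
    rw [hci.measureReal_inter (filtI_le N T j T) (filtOthers_le j t)
      (filtI_mono j (by omega : t + 1 ≤ T) _ hs₁) hs₂,
      ← integral_toReal (measurable_kernel_updateValue_mem hs₁').aemeasurable.restrict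
        (Filter.Eventually.of_forall fun ω => measure_lt_top _ _)]
    refine integral_congr_ae (ae_restrict_of_ae ?_)
    filter_upwards [condExp_indicator_eval_ae_eq hκ hS] with ω hω
    simp [hω, Measure.real, updateValue]
  rw [hstep]
  exact (ENNReal.toReal_eq_toReal_iff' (measure_ne_top _ _) (hstep ▸ measure_ne_top _ _)).mp hreal

lemma measure_eq_stepMeasure [IsProbabilityMeasure π] [IsMarkovKernel κ]
    (hκ : IsStepKernel (π.map fun ω => ω j) t κ)
    (hci : CondIndep (filtI N T j t) (filtI N T j T) (filtOthers N T j t) (filtI_le N T j t) π)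
    (ht : t < T) {s : Set (Fin N → OTPath T)} (hs : MeasurableSet[filtNext N T j t] s) :
    π s = stepMeasure π j t κ s :=
  ext_on_measurableSpace_of_generate_finite _ _
    (by rintro _ ⟨_, hs₁, _, hs₂, rfl⟩; exact measure_inter_eq_stepMeasure hκ hci ht hs₁ hs₂)
    (filtNext_le j t) (MeasurableSpace.sup_eq_generateFrom_image2_inter _ _)
    (MeasurableSpace.isPiSystem_image2_inter _ _) (by simp) hs

end StepMeasure

section GoodSet

variable {N T : ℕ} (A : ℕ → Fin N → (Fin N → OTPath T) → Set ℝ)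

def IsNonanticipative : Prop :=
  ∀ t i ω ω', (∀ j, trunc (ω j) t = trunc (ω' j) t) → A t i ω = A t i ω'

/-- `goodSet A T ∅` is the glued set `⊠ₜ (A^{t,1} × ⋯ × A^{t,N})`. -/
def goodSet (t : ℕ) (S : Finset (Fin N)) : Set (Fin N → OTPath T) :=
  {ω | (∀ i, ∀ s < t, ev (ω i) s ∈ A s i ω) ∧ ∀ i ∈ S, ev (ω i) t ∈ A t i ω}

variable {A}

lemma goodSet_congr (hA : IsNonanticipative A) {t : ℕ} {S : Finset (Fin N)}
    {ω ω' : Fin N → OTPath T} (htrunc : ∀ k, trunc (ω k) t = trunc (ω' k) t)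
    (hev : ∀ i ∈ S, ev (ω i) t = ev (ω' i) t) :
    ω ∈ goodSet A t S ↔ ω' ∈ goodSet A t S := by
  have hA' : ∀ s ≤ t, ∀ i, A s i ω = A s i ω' := fun s hs i =>
    hA s i ω ω' fun k => by rw [← trunc_trunc_of_le _ hs, htrunc, trunc_trunc_of_le _ hs]
  have hev' : ∀ i, ∀ s < t, ev (ω i) s = ev (ω' i) s := fun i s hs => by
    rw [← ev_trunc_of_lt _ hs, htrunc, ev_trunc_of_lt _ hs]
  refine and_congr (forall_congr' fun i => forall₂_congr fun s hs => ?_)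
    (forall₂_congr fun i hi => ?_)
  · rw [hev' i s hs, hA' s hs.le i]
  · rw [hev i hi, hA' t le_rfl i]

lemma mem_goodSet_insert {t : ℕ} {j : Fin N} {S : Finset (Fin N)} {ω : Fin N → OTPath T} :
    ω ∈ goodSet A t (insert j S) ↔ ω ∈ goodSet A t S ∧ ev (ω j) t ∈ A t j ω := by
  simp only [goodSet, Set.mem_ofPred_eq, Finset.forall_mem_insert]
  tauto

lemma mem_goodSet_univ {t : ℕ} {ω : Fin N → OTPath T} :
    ω ∈ goodSet A t Finset.univ ↔ ω ∈ goodSet A t ∅ ∧ ∀ j, ω ∈ goodSet A t {j} := by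
  constructor
  · rintro ⟨hlt, hall⟩
    exact ⟨⟨hlt, by simp⟩, fun j => ⟨hlt, by simpa using hall j (Finset.mem_univ j)⟩⟩
  · rintro ⟨⟨hlt, -⟩, hone⟩
    exact ⟨hlt, fun i _ => (hone i).2 i (Finset.mem_singleton_self i)⟩

lemma goodSet_succ_empty (t : ℕ) : goodSet A (t + 1) ∅ = goodSet A t Finset.univ := by
  ext ω
  constructor
  · rintro ⟨hlt, -⟩
    exact ⟨fun i s hs => hlt i s (by omega), fun i _ => hlt i t (by omega)⟩
  · rintro ⟨hlt, hnow⟩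
    refine ⟨fun i s hs => ?_, by simp⟩
    rcases Nat.lt_succ_iff_lt_or_eq.mp hs with hs | rfl
    exacts [hlt i s hs, hnow i (Finset.mem_univ i)]

lemma preimage_truncNext_goodSet_singleton (hA : IsNonanticipative A) (j : Fin N) (t : ℕ) :
    truncNext j t ⁻¹' goodSet A t {j} = goodSet A t {j} := by
  ext ω
  refine goodSet_congr hA (fun k => ?_) (fun i hi => ?_)
  · by_cases hk : k = j
    · subst hk
      simp [truncNext, trunc_trunc_of_le]
    · simp [truncNext, hk, trunc_trunc_of_le]
  · rw [Finset.mem_singleton.mp hi]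
    simp [truncNext, ev_trunc_of_lt]

lemma updateValue_mem_goodSet_insert (hA : IsNonanticipative A) {t : ℕ} (ht : t < T)
    {j : Fin N} {S : Finset (Fin N)} (hj : j ∉ S) (ω : Fin N → OTPath T) (v : ℝ) :
    updateValue ω j t v ∈ goodSet A t (insert j S) ↔ ω ∈ goodSet A t S ∧ v ∈ A t j ω := by
  have htrunc : ∀ k, trunc (updateValue ω j t v k) t = trunc (ω k) t := fun k =>
    trunc_updateValue_of_le ω j k le_rfl v
  have hS : updateValue ω j t v ∈ goodSet A t S ↔ ω ∈ goodSet A t S :=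
    goodSet_congr hA htrunc fun i hi => by
      rw [updateValue_apply_of_ne _ (ne_of_mem_of_not_mem hi hj)]
  rw [mem_goodSet_insert, hS, updateValue_apply_self, ev_set1_self _ ht, hA t j _ _ htrunc]

lemma kernel_updateValue_mem_goodSet_insert (hA : IsNonanticipative A) {t : ℕ} (ht : t < T)
    {j : Fin N} {S : Finset (Fin N)} (hj : j ∉ S) {κ : Kernel (OTPath T) ℝ} [IsMarkovKernel κ]
    (hfull : ∀ ω, κ (ω j) {v | v ∉ A t j ω} = 0) (ω : Fin N → OTPath T) :
    κ (ω j) {v | updateValue ω j t v ∈ goodSet A t (insert j S)}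
      = (goodSet A t S).indicator 1 ω := by
  simp_rw [updateValue_mem_goodSet_insert hA ht hj]
  by_cases hω : ω ∈ goodSet A t S
  · simp only [hω, true_and, Set.indicator_of_mem, Pi.one_apply, Set.ofPred_mem_eq]
    rw [measure_congr (ae_eq_univ.mpr (hfull ω)), measure_univ]
  · simp [hω]

lemma measurableSet_goodSet_of_insert (hA : IsNonanticipative A) {t : ℕ} (ht : t < T)
    {j : Fin N} {S : Finset (Fin N)} (hj : j ∉ S) {κ : Kernel (OTPath T) ℝ} [IsMarkovKernel κ]
    (hfull : ∀ ω, κ (ω j) {v | v ∉ A t j ω} = 0)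
    (hins : MeasurableSet (goodSet A t (insert j S))) : MeasurableSet (goodSet A t S) := by
  have h := measurable_kernel_updateValue_mem (κ := κ) (j := j) (t := t) hins
  simp_rw [kernel_updateValue_mem_goodSet_insert hA ht hj hfull] at h
  exact (measurable_indicator_const_iff 1).mp h

lemma measurableSet_goodSet_of_univ (hA : IsNonanticipative A) {t : ℕ} (ht : t < T)
    {K : Fin N → Kernel (OTPath T) ℝ} [∀ j, IsMarkovKernel (K j)]
    (hfull : ∀ j ω, K j (ω j) {v | v ∉ A t j ω} = 0)
    (huniv : MeasurableSet (goodSet A t Finset.univ)) (S : Finset (Fin N)) :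
    MeasurableSet (goodSet A t S) := by
  suffices h : ∀ R : Finset (Fin N), MeasurableSet (goodSet A t Rᶜ) by simpa using h Sᶜ
  intro R
  induction R using Finset.induction_on with
  | empty => simpa using huniv
  | insert j R hj ih =>
    rw [show Rᶜ = insert j (insert j R)ᶜ by ext a; by_cases a = j <;> simp_all] at ih
    exact measurableSet_goodSet_of_insert hA ht (by simp) (hfull j) ih

lemma measurableSet_goodSet (hA : IsNonanticipative A) {K : Fin N → ℕ → Kernel (OTPath T) ℝ}
    [∀ i t, IsMarkovKernel (K i t)]
    (hfullK : ∀ i, ∀ t : ℕ, 1 ≤ t → t < T → ∀ ω : Fin N → OTPath T,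
      (K i t) (ω i) {v : ℝ | v ∉ A t i ω} = 0)
    (hT : MeasurableSet (goodSet A T ∅)) {t : ℕ} (ht1 : 1 ≤ t) (htT : t ≤ T) :
    MeasurableSet (goodSet A t ∅) := by
  induction htT using Nat.decreasingInduction with
  | self => exact hT
  | of_succ t ht ih =>
    refine measurableSet_goodSet_of_univ hA ht (fun j => hfullK j t ht1 ht) ?_ ∅
    rw [← goodSet_succ_empty]
    exact ih (by omega)

end GoodSet

section Coupling

variable {N T : ℕ} {A : ℕ → Fin N → (Fin N → OTPath T) → Set ℝ}
  {π : Measure (Fin N → OTPath T)}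

lemma ae_mem_goodSet_one (hA : IsNonanticipative A) {P : Fin N → Measure (OTPath T)}
    (hmarg : ∀ i, π.map (fun ω => ω i) = P i)
    (hfull0 : ∀ i, P i {x : OTPath T | ev x 0 ∉ A 0 i (fun _ => 0)} = 0) :
    ∀ᵐ ω ∂π, ω ∈ goodSet A 1 ∅ := by
  have h : ∀ i, ∀ᵐ ω ∂π, ev (ω i) 0 ∈ A 0 i (fun _ => 0) := fun i =>
    ae_of_ae_map (measurable_pi_apply i).aemeasurable (hmarg i ▸ hfull0 i)
  filter_upwards [ae_all_iff.mpr h] with ω hω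
  refine ⟨fun i s hs => ?_, by simp⟩
  obtain rfl : s = 0 := by omega
  rw [hA 0 i ω (fun _ => 0) fun k => by simp [trunc_zero_right]]
  exact hω i

lemma ae_mem_goodSet_singleton [IsProbabilityMeasure π] (hA : IsNonanticipative A) {t : ℕ}
    (ht : t < T) {j : Fin N} {κ : Kernel (OTPath T) ℝ} [IsMarkovKernel κ]
    (hfull : ∀ ω, κ (ω j) {v | v ∉ A t j ω} = 0)
    (hκ : IsStepKernel (π.map fun ω => ω j) t κ)
    (hci : CondIndep (filtI N T j t) (filtI N T j T) (filtOthers N T j t) (filtI_le N T j t) π)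
    (hmeas : ∀ S, MeasurableSet (goodSet A t S)) (hG : ∀ᵐ ω ∂π, ω ∈ goodSet A t ∅) :
    ∀ᵐ ω ∂π, ω ∈ goodSet A t {j} := by
  refine mem_ae_iff.mpr ((prob_compl_eq_zero_iff (hmeas {j})).mpr ?_)
  calc π (goodSet A t {j})
      = stepMeasure π j t κ (goodSet A t (insert j ∅)) :=
        measure_eq_stepMeasure hκ hci ht (measurableSet_filtNext_of_preimage_truncNext
          (hmeas {j}) (preimage_truncNext_goodSet_singleton hA j t))
    _ = ∫⁻ ω, (goodSet A t ∅).indicator 1 ω ∂π := by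
        rw [stepMeasure_apply (hmeas _)]
        exact lintegral_congr
          (kernel_updateValue_mem_goodSet_insert hA ht (Finset.notMem_empty j) hfull)
    _ = 1 := by
        rw [lintegral_indicator_one (hmeas ∅)]
        exact (prob_compl_eq_zero_iff (hmeas ∅)).mp (mem_ae_iff.mp hG)

lemma ae_mem_goodSet [IsProbabilityMeasure π] (hA : IsNonanticipative A)
    {P : Fin N → Measure (OTPath T)} {K : Fin N → ℕ → Kernel (OTPath T) ℝ}
    [∀ i t, IsMarkovKernel (K i t)]
    (hK : ∀ i, ∀ t : ℕ, 1 ≤ t → t < T → IsStepKernel (P i) t (K i t))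
    (hmarg : ∀ i, π.map (fun ω => ω i) = P i)
    (hmc : Multicausal N T π)
    (hfull0 : ∀ i, P i {x : OTPath T | ev x 0 ∉ A 0 i (fun _ => 0)} = 0)
    (hfullK : ∀ i, ∀ t : ℕ, 1 ≤ t → t < T → ∀ ω : Fin N → OTPath T,
      (K i t) (ω i) {v : ℝ | v ∉ A t i ω} = 0)
    (hT : MeasurableSet (goodSet A T ∅)) {t : ℕ} (ht : t ≤ T) :
    ∀ᵐ ω ∂π, ω ∈ goodSet A t ∅ := by
  induction t with
  | zero => simp [goodSet]
  | succ t ih =>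
    rcases Nat.eq_zero_or_pos t with rfl | ht1
    · exact ae_mem_goodSet_one hA hmarg hfull0
    have htT : t < T := by omega
    have hmeas : ∀ S, MeasurableSet (goodSet A t S) :=
      measurableSet_goodSet_of_univ hA htT (fun j => hfullK j t ht1 htT)
        (goodSet_succ_empty t ▸ measurableSet_goodSet hA hfullK hT (by omega) ht)
    have hone : ∀ j, ∀ᵐ ω ∂π, ω ∈ goodSet A t {j} := fun j =>
      ae_mem_goodSet_singleton hA htT (hfullK j t ht1 htT) (hmarg j ▸ hK j t ht1 htT)
        (hmc j t ht1 htT.le) hmeas (ih htT.le)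
    filter_upwards [ih htT.le, ae_all_iff.mpr hone] with ω hω hωj
    rw [goodSet_succ_empty]
    exact mem_goodSet_univ.mpr ⟨hω, hωj⟩

end Coupling

theorem multicausal_polar_sufficiency_general
    (N T : ℕ) (P : Fin N → Measure (OTPath T))
    (K : Fin N → ℕ → Kernel (OTPath T) ℝ) [∀ i t, IsMarkovKernel (K i t)]
    -- `K i t` is the one-step disintegration of `P i`
    (hK : ∀ i, ∀ t : ℕ, 1 ≤ t → t < T → ∀ h : OTPath T → ℝ,
      Measurable[filt T (t + 1)] h → Integrable h (P i) →
      (P i)[h | filt T t] =ᵐ[P i] fun x => ∫ v, h (set1 x t v) ∂(K i t x))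
    -- the slices of the glued set
    (A : ℕ → Fin N → (Fin N → OTPath T) → Set ℝ)
    -- slices depend only on the history up to time t
    (hAdep : ∀ t i ω ω', (∀ j, trunc (ω j) t = trunc (ω' j) t) → A t i ω = A t i ω')
    -- the time-0 slices are `P^i`-full
    (hfull0 : ∀ i, P i {x : OTPath T | ev x 0 ∉ A 0 i (fun _ => 0)} = 0)
    -- the later slices are full for the corresponding kernels
    (hfullK : ∀ i, ∀ t : ℕ, 1 ≤ t → t < T → ∀ ω : Fin N → OTPath T,
      (K i t) (ω i) {v : ℝ | v ∉ A t i ω} = 0)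
    -- the glued set and its complement E'
    (E' : Set (Fin N → OTPath T))
    (hE'def : E' = {ω : Fin N → OTPath T |
      ¬ ∀ i : Fin N, ∀ t : ℕ, t < T → ev (ω i) t ∈ A t i ω})
    (hE'meas : MeasurableSet E')
    (E : Set (Fin N → OTPath T)) (hEE' : E ⊆ E') :
    ∀ π : ProbabilityMeasure (Fin N → OTPath T),
      (∀ i, (π : Measure (Fin N → OTPath T)).map (fun ω => ω i) = P i) →
      Multicausal N T (π : Measure (Fin N → OTPath T)) →
      (π : Measure (Fin N → OTPath T)) E' = 0 ∧
      (π : Measure (Fin N → OTPath T)) E = 0 := by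
  intro π hmarg hmc
  have hE' : E' = (goodSet A T ∅)ᶜ := by
    ext ω
    simp [hE'def, goodSet]
  have hnull : (π : Measure (Fin N → OTPath T)) E' = 0 := by
    rw [hE']
    refine mem_ae_iff.mp (ae_mem_goodSet hAdep hK hmarg hmc hfull0 hfullK ?_ le_rfl)
    simpa [hE'] using hE'meas.compl
  exact ⟨hnull, measure_mono_null hEE' hnull⟩

/-- Sufficiency of full product-structured sets for multicausal polarity: the complement of
a glued set built from full slices is null for every multicausal coupling; hence any Borel
subset of it is polar. -/
theorem multicausal_polar_sufficiency
    (N T : ℕ) (P : Fin N → Measure (OTPath T)) [∀ i, IsProbabilityMeasure (P i)]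
    (K : Fin N → ℕ → Kernel (OTPath T) ℝ) [∀ i t, IsMarkovKernel (K i t)]
    (hKdep : ∀ i t x y, trunc x t = trunc y t → K i t x = K i t y)
    -- `K i t` is the one-step disintegration of `P i`
    (hK : ∀ i, ∀ t : ℕ, 1 ≤ t → t < T → ∀ h : OTPath T → ℝ,
      Measurable[filt T (t + 1)] h → Integrable h (P i) →
      (P i)[h | filt T t] =ᵐ[P i] fun x => ∫ v, h (set1 x t v) ∂(K i t x))
    -- the slices of the glued set
    (A : ℕ → Fin N → (Fin N → OTPath T) → Set ℝ)
    -- slices depend only on the history up to time t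
    (hAdep : ∀ t i ω ω', (∀ j, trunc (ω j) t = trunc (ω' j) t) → A t i ω = A t i ω')
    -- the time-0 slices are `P^i`-full
    (hfull0 : ∀ i, P i {x : OTPath T | ev x 0 ∉ A 0 i (fun _ => 0)} = 0)
    -- the later slices are full for the corresponding kernels
    (hfullK : ∀ i, ∀ t : ℕ, 1 ≤ t → t < T → ∀ ω : Fin N → OTPath T,
      (K i t) (ω i) {v : ℝ | v ∉ A t i ω} = 0)
    -- the glued set and its complement E'
    (E' : Set (Fin N → OTPath T))
    (hE'def : E' = {ω : Fin N → OTPath T |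
      ¬ ∀ i : Fin N, ∀ t : ℕ, t < T → ev (ω i) t ∈ A t i ω})
    (hE'meas : MeasurableSet E')
    (E : Set (Fin N → OTPath T)) (hEmeas : MeasurableSet E) (hEE' : E ⊆ E') :
    ∀ π : ProbabilityMeasure (Fin N → OTPath T),
      (∀ i, (π : Measure (Fin N → OTPath T)).map (fun ω => ω i) = P i) →
      Multicausal N T (π : Measure (Fin N → OTPath T)) →
      (π : Measure (Fin N → OTPath T)) E' = 0 ∧
      (π : Measure (Fin N → OTPath T)) E = 0 :=
  multicausal_polar_sufficiency_general N T P K hK A hAdep hfull0 hfullK E' hE'def hE'meas E hEE'
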